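/- arXiv:1603.03287 — 2 statements merged into one kernel-verified Lean document; each statement's English description precedes it below -/
import Mathlib

section
/- Let V : ℝⁿ → ℝ≥0 satisfy α₁(‖x‖) ≤ V(x) ≤ α₂(‖x‖) for all x with α₁, α₂ ∈ 𝒦∞, and suppose along solutions V(x(t+d)) − V(x(t)) ≤ −γ(‖x(t)‖) for some γ ∈ 𝒦. Then there exists a continuous positive definite function ρ : ℝ≥0 → ℝ≥0 with ρ(s) < s for all s > 0 and ρ(0) = 0 such that V(x(t+d)) ≤ ρ(V(x(t))) along the same solutions. In particular, ρ can be taken as ρ = id − ½·(γ ∘ α₂⁻¹). -/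
noncomputable section
open Set Filter

def IsKFun (α : ℝ → ℝ) : Prop :=
  ContinuousOn α (Set.Ici 0) ∧ StrictMonoOn α (Set.Ici 0) ∧ α 0 = 0

def IsKInfFun (α : ℝ → ℝ) : Prop :=
  IsKFun α ∧ Filter.Tendsto α Filter.atTop Filter.atTop

open Function

/-!
Since `V ≤ α₂ ∘ ‖·‖` and `α₂` is a bijection of `[0, ∞)`, `α₂⁻¹ (V y) ≤ ‖y‖`, so the decrease
`γ ‖x t‖` over one step dominates `γ (α₂⁻¹ (V (x t)))`. Hence `V (x (t + d)) ≤ ρ (V (x t))` with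
`ρ s = s - ½ γ (α₂⁻¹ s)`, cut off below at `s / 2` to keep it positive. Continuity of `ρ` comes
from the continuity of `α₂⁻¹`, a strictly monotone map of `[0, ∞)` onto itself.
-/

theorem StrictMonoOn.continuousOn_Ici_of_image_eq {α β : Type*} [LinearOrder α]
    [TopologicalSpace α] [OrderTopology α] [LinearOrder β] [TopologicalSpace β] [OrderTopology β]
    [DenselyOrdered β] {f : α → β} {a : α} (hf : StrictMonoOn f (Ici a))
    (himage : f '' Ici a = Ici (f a)) : ContinuousOn f (Ici a) := by
  intro b hb
  rcases (mem_Ici.1 hb).eq_or_lt with rfl | hab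
  · exact continuousWithinAt_right_of_monotoneOn_of_image_mem_nhdsWithin hf.monotoneOn
      self_mem_nhdsWithin (himage ▸ self_mem_nhdsWithin)
  · exact (continuousAt_of_monotoneOn_of_image_mem_nhds hf.monotoneOn (Ici_mem_nhds hab)
      (himage ▸ Ici_mem_nhds (hf self_mem_Ici hb hab))).continuousWithinAt

namespace IsKFun

variable {α β : ℝ → ℝ}

theorem nonneg (hα : IsKFun α) {s : ℝ} (hs : 0 ≤ s) : 0 ≤ α s :=
  hα.2.2 ▸ hα.2.1.monotoneOn self_mem_Ici hs hs

theorem pos (hα : IsKFun α) {s : ℝ} (hs : 0 < s) : 0 < α s :=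
  hα.2.2 ▸ hα.2.1 self_mem_Ici hs.le hs

theorem mapsTo (hα : IsKFun α) : MapsTo α (Ici 0) (Ici 0) :=
  fun _ hs => hα.nonneg hs

theorem comp (hα : IsKFun α) (hβ : IsKFun β) : IsKFun (α ∘ β) :=
  ⟨hα.1.comp hβ.1 hβ.mapsTo, hα.2.1.comp hβ.2.1 hβ.mapsTo, by simp [hβ.2.2, hα.2.2]⟩

end IsKFun

namespace IsKInfFun

variable {α : ℝ → ℝ}

theorem bijOn (hα : IsKInfFun α) : BijOn α (Ici 0) (Ici 0) :=
  ⟨hα.1.mapsTo, hα.1.2.1.injOn, fun _ hs => intermediate_value_Ici hα.1.1 hα.2 (hα.1.2.2.symm ▸ hs)⟩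

theorem invOn_invFunOn (hα : IsKInfFun α) : InvOn (invFunOn α (Ici 0)) α (Ici 0) (Ici 0) :=
  hα.bijOn.invOn_invFunOn

theorem isKFun_invFunOn (hα : IsKInfFun α) : IsKFun (invFunOn α (Ici 0)) := by
  set i := invFunOn α (Ici 0)
  have hinv := hα.invOn_invFunOn
  have hbij : BijOn i (Ici 0) (Ici 0) := hα.bijOn.symm hinv.symm
  have hmono : StrictMonoOn i (Ici 0) := fun a ha b hb hab =>
    (hα.1.2.1.lt_iff_lt (hbij.mapsTo ha) (hbij.mapsTo hb)).1 (by rwa [hinv.2 ha, hinv.2 hb])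
  have hzero : i 0 = 0 := by simpa [hα.1.2.2] using hinv.1 (self_mem_Ici : (0 : ℝ) ∈ Ici 0)
  exact ⟨hmono.continuousOn_Ici_of_image_eq (by rw [hbij.image_eq, hzero]), hmono, hzero⟩

end IsKInfFun

def kContraction (β : ℝ → ℝ) (s : ℝ) : ℝ :=
  max (s - β s / 2) (s / 2)

section kContraction

variable {β : ℝ → ℝ} {s : ℝ}

theorem continuousOn_kContraction (hβ : ContinuousOn β (Ici 0)) :
    ContinuousOn (kContraction β) (Ici 0) :=
  (continuousOn_id.sub (hβ.div_const 2)).sup (continuousOn_id.div_const 2)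

theorem kContraction_zero (hβ : β 0 = 0) : kContraction β 0 = 0 := by
  simp [kContraction, hβ]

theorem kContraction_pos (hs : 0 < s) : 0 < kContraction β s :=
  lt_max_of_lt_right (half_pos hs)

theorem kContraction_lt_self (hs : 0 < s) (hβ : 0 < β s) : kContraction β s < s :=
  max_lt (by linarith) (half_lt_self hs)

end kContraction

theorem stmt0_general {n : ℕ}
    (V : EuclideanSpace ℝ (Fin n) → ℝ) (α₁ α₂ γ : ℝ → ℝ) (d : ℝ)
    (hα₁ : IsKInfFun α₁) (hα₂ : IsKInfFun α₂) (hγ : IsKFun γ)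
    (hbound : ∀ y, α₁ ‖y‖ ≤ V y ∧ V y ≤ α₂ ‖y‖)
    (x : ℝ → EuclideanSpace ℝ (Fin n))
    (hdec : ∀ t ≥ (0:ℝ), V (x (t + d)) - V (x t) ≤ -γ ‖x t‖) :
    (∃ ρ : ℝ → ℝ, ContinuousOn ρ (Set.Ici 0) ∧ ρ 0 = 0 ∧
      (∀ s > (0:ℝ), 0 < ρ s ∧ ρ s < s) ∧
      (∀ t ≥ (0:ℝ), V (x (t + d)) ≤ ρ (V (x t)))) ∧
    (∀ α₂inv : ℝ → ℝ, (∀ s ∈ Set.Ici (0:ℝ), α₂inv (α₂ s) = s) →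
      (∀ s ∈ Set.Ici (0:ℝ), α₂ (α₂inv s) = s ∧ 0 ≤ α₂inv s) →
      ∀ t ≥ (0:ℝ), V (x (t + d)) ≤ V (x t) - γ (α₂inv (V (x t))) / 2) := by
  have hV : ∀ y, 0 ≤ V y := fun y => (hα₁.1.nonneg (norm_nonneg y)).trans (hbound y).1
  have step : ∀ i : ℝ → ℝ, (∀ s ∈ Ici (0:ℝ), α₂ (i s) = s ∧ 0 ≤ i s) →
      ∀ t ≥ (0:ℝ), V (x (t + d)) ≤ V (x t) - γ (i (V (x t))) / 2 := by
    intro i hi t ht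
    obtain ⟨hαi, hi0⟩ := hi _ (hV (x t))
    have hle : i (V (x t)) ≤ ‖x t‖ :=
      (hα₂.1.2.1.le_iff_le hi0 (norm_nonneg _)).1 (hαi.symm ▸ (hbound _).2)
    have hγle := hγ.2.1.monotoneOn hi0 (norm_nonneg _) hle
    linarith [hdec t ht, hγ.nonneg hi0]
  set i := invFunOn α₂ (Ici 0)
  have hi : IsKFun i := hα₂.isKFun_invFunOn
  have hβ : IsKFun (γ ∘ i) := hγ.comp hi
  have hρ : ∀ t ≥ (0:ℝ), V (x (t + d)) ≤ kContraction (γ ∘ i) (V (x t)) := fun t ht =>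
    (step i (fun _ hs => ⟨hα₂.invOn_invFunOn.2 hs, hi.nonneg hs⟩) t ht).trans (le_max_left _ _)
  exact ⟨⟨kContraction (γ ∘ i), continuousOn_kContraction hβ.1, kContraction_zero hβ.2.2,
    fun s hs => ⟨kContraction_pos hs, kContraction_lt_self hs (hβ.pos hs)⟩, hρ⟩,
    fun α₂inv _ hα₂inv => step α₂inv hα₂inv⟩

/-- if `V` is sandwiched between 𝒦∞ functions of the norm and decreases by
`γ(‖x(t)‖)` over each time interval of length `d` along solutions, then there is a
continuous positive definite `ρ < id` with `V(x(t+d)) ≤ ρ(V(x(t)))`; in particular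
`ρ = id − ½ (γ ∘ α₂⁻¹)` works. -/
theorem stmt0 {n : ℕ} (f : EuclideanSpace ℝ (Fin n) → EuclideanSpace ℝ (Fin n))
    (V : EuclideanSpace ℝ (Fin n) → ℝ) (α₁ α₂ γ : ℝ → ℝ) (d : ℝ) (hd : 0 < d)
    (hα₁ : IsKInfFun α₁) (hα₂ : IsKInfFun α₂) (hγ : IsKFun γ)
    (hbound : ∀ y, α₁ ‖y‖ ≤ V y ∧ V y ≤ α₂ ‖y‖)
    (x : ℝ → EuclideanSpace ℝ (Fin n)) (hx : ∀ t, HasDerivAt x (f (x t)) t)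
    (hdec : ∀ t ≥ (0:ℝ), V (x (t + d)) - V (x t) ≤ -γ ‖x t‖) :
    (∃ ρ : ℝ → ℝ, ContinuousOn ρ (Set.Ici 0) ∧ ρ 0 = 0 ∧
      (∀ s > (0:ℝ), 0 < ρ s ∧ ρ s < s) ∧
      (∀ t ≥ (0:ℝ), V (x (t + d)) ≤ ρ (V (x t)))) ∧
    (∀ α₂inv : ℝ → ℝ, (∀ s ∈ Set.Ici (0:ℝ), α₂inv (α₂ s) = s) →
      (∀ s ∈ Set.Ici (0:ℝ), α₂ (α₂inv s) = s ∧ 0 ≤ α₂inv s) →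
      ∀ t ≥ (0:ℝ), V (x (t + d)) ≤ V (x t) - γ (α₂inv (V (x t))) / 2) :=
  stmt0_general V α₁ α₂ γ d hα₁ hα₂ hγ hbound x hdec
end
end

section
/- For the repressilator model ẋᵢ = α/(1 + x_{i+1}^β) − xᵢ (indices mod 3) with α > 0 and β > 1, every equilibrium is symmetric, of the form E = (r, r, r) where r > 0 is the unique positive root of r^{β+1} + r − α = 0. -/
noncomputable section
open Set Filter Real

/-- for the repressilator `ẋᵢ = α/(1 + x_{i+1}^β) − xᵢ` (indices mod 3)
with `α > 0`, `β > 1`, there is a unique `r > 0` with `r^{β+1} + r = α`, and every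
(nonnegative) equilibrium is the symmetric point `(r, r, r)`. -/
theorem stmt18 (α β : ℝ) (hα : 0 < α) (hβ : 1 < β) :
    ∃ r : ℝ, 0 < r ∧ r ^ (β + 1) + r = α ∧
      (∀ r' : ℝ, 0 < r' → r' ^ (β + 1) + r' = α → r' = r) ∧
      ∀ x1 x2 x3 : ℝ, 0 ≤ x1 → 0 ≤ x2 → 0 ≤ x3 →
        α / (1 + x2 ^ β) = x1 → α / (1 + x3 ^ β) = x2 → α / (1 + x1 ^ β) = x3 →
        x1 = r ∧ x2 = r ∧ x3 = r := by
  have hβ0 : (0:ℝ) < β := by linarith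
  have hβ1 : (0:ℝ) < β + 1 := by linarith
  -- strict monotonicity of g r = r^(β+1)+r on [0,∞)
  have hmono : ∀ a b : ℝ, 0 ≤ a → a < b → a ^ (β+1) + a < b ^ (β+1) + b := by
    intro a b ha hab
    exact add_lt_add (Real.rpow_lt_rpow ha hab hβ1) hab
  -- continuity of g
  have hcont : Continuous (fun x : ℝ => x ^ (β+1) + x) := by
    refine Continuous.add ?_ continuous_id
    exact continuous_iff_continuousAt.2 fun x =>
      Real.continuousAt_rpow_const x (β+1) (Or.inr hβ1.le)
  -- existence of r via IVT on [0, α+1]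
  have h0 : (0:ℝ) ^ (β+1) + 0 = 0 := by
    rw [Real.zero_rpow (by linarith)]; ring
  have htop : α ≤ (α+1) ^ (β+1) + (α+1) := by
    have := Real.rpow_nonneg (by linarith : (0:ℝ) ≤ α + 1) (β+1)
    linarith
  have hIVT := intermediate_value_Icc (by linarith : (0:ℝ) ≤ α + 1)
    (hcont.continuousOn (s := Icc 0 (α+1)))
  have hαmem : α ∈ Icc ((0:ℝ) ^ (β+1) + 0) ((α+1) ^ (β+1) + (α+1)) := by
    constructor
    · rw [h0]; exact hα.le
    · exact htop
  obtain ⟨r, hrmem, hr'⟩ := hIVT hαmem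
  have hr : r ^ (β + 1) + r = α := hr'
  have hr0 : 0 < r := by
    rcases lt_or_eq_of_le hrmem.1 with h | h
    · exact h
    · exfalso; rw [← h] at hr; rw [h0] at hr; linarith
  have huniq : ∀ r' : ℝ, 0 < r' → r' ^ (β + 1) + r' = α → r' = r := by
    intro r' hr' he
    rcases lt_trichotomy r' r with h | h | h
    · have := hmono r' r hr'.le h; rw [he, hr] at this; linarith
    · exact h
    · have := hmono r r' hr0.le h; rw [he, hr] at this; linarith
  refine ⟨r, hr0, hr, huniq, ?_⟩
  intro x1 x2 x3 h1 h2 h3 e1 e2 e3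
  have hden : ∀ s : ℝ, 0 ≤ s → 0 < 1 + s ^ β := fun s hs => by
    have := Real.rpow_nonneg hs β; linarith
  -- h is strictly decreasing on [0,∞)
  have hdec : ∀ a b : ℝ, 0 ≤ a → a < b → α / (1 + b ^ β) < α / (1 + a ^ β) := by
    intro a b ha hab
    have hb : a ^ β < b ^ β := Real.rpow_lt_rpow ha hab hβ0
    exact div_lt_div_of_pos_left hα (hden a ha) (by linarith)
  have h12 : x1 = x2 := by
    rcases lt_trichotomy x1 x2 with h | h | h
    · -- x1 < x2 ⇒ x1 < x3 ⇒ x2 < x3 ⇒ x2 < x1, contradiction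
      have a1 : x1 < x3 := by
        have := hdec x1 x2 h1 h; rw [e1, e3] at this; exact this
      have a2 : x2 < x3 := by
        have := hdec x1 x3 h1 a1; rw [e2, e3] at this; exact this
      have a3 : x2 < x1 := by
        have := hdec x2 x3 h2 a2; rw [e1, e2] at this; exact this
      linarith
    · exact h
    · have a1 : x3 < x1 := by
        have := hdec x2 x1 h2 h; rw [e1, e3] at this; exact this
      have a2 : x3 < x2 := by
        have := hdec x3 x1 h3 a1; rw [e2, e3] at this; exact this
      have a3 : x1 < x2 := by
        have := hdec x3 x2 h3 a2; rw [e1, e2] at this; exact this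
      linarith
  subst h12
  have h13 : x1 = x3 := e1.symm.trans e3
  subst h13
  have hx1pos : 0 < x1 := by
    rw [← e1]; exact div_pos hα (hden x1 h1)
  have keq : x1 ^ (β + 1) + x1 = α := by
    have hd := hden x1 h1
    have : α = x1 * (1 + x1 ^ β) := by
      field_simp at e1
      linarith [e1]
    rw [Real.rpow_add_one (ne_of_gt hx1pos), this]; ring
  have hx1r : x1 = r := huniq x1 hx1pos keq
  exact ⟨hx1r, hx1r, hx1r⟩
end
end
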